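/- arXiv:2304.11232 — 7 statements merged into one kernel-verified Lean document; each statement's English description precedes it below -/
import Mathlib

section
/- Let G act properly by homeomorphisms on a locally compact Hausdorff space X. Then every point ξ ∈ X with every neighborhood W admits a G-adapted open neighborhood U ⊆ W, i.e., an open set U with compact closure such that for every g ∈ G either U·g = U or the closures of U·g and U are disjoint. -/
/-- Let a group `G` act properly (on the right) by homeomorphisms on a
locally compact Hausdorff space `X`, with finite point stabilizers. Then every point
`ξ ∈ X` and every neighborhood `W` of `ξ` admit a `G`-adapted open neighborhood
`U ⊆ W` of `ξ`: an open set with compact closure such that for every `g ∈ G` either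
`U·g = U` or the closures of `U·g` and `U` are disjoint. -/
theorem exists_adapted_nhd {G X : Type*} [Group G]
    [TopologicalSpace X] [LocallyCompactSpace X] [T2Space X]
    (act : X → G → X)
    (h_one : ∀ x, act x 1 = x)
    (h_mul : ∀ (x) (g h : G), act x (g * h) = act (act x g) h)
    (h_homeo : ∀ g : G, Continuous fun x => act x g)
    (h_proper : ∀ K : Set X, IsCompact K →
      {g : G | ((fun x => act x g) '' K ∩ K).Nonempty}.Finite)
    (h_stab : ∀ x : X, {g : G | act x g = x}.Finite)
    (ξ : X) (W : Set X) (hW : W ∈ nhds ξ) :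
    ∃ U : Set X, IsOpen U ∧ ξ ∈ U ∧ U ⊆ W ∧ IsCompact (closure U) ∧
      ∀ g : G, (fun x => act x g) '' U = U ∨
        Disjoint (closure ((fun x => act x g) '' U)) (closure U) := by
  classical
  haveI : T25Space X := inferInstance
  -- each g acts as a homeomorphism
  let e : G → X ≃ₜ X := fun g =>
    { toFun := fun x => act x g
      invFun := fun x => act x g⁻¹
      left_inv := fun x => by show act (act x g) g⁻¹ = x; rw [← h_mul, mul_inv_cancel, h_one]
      right_inv := fun x => by show act (act x g⁻¹) g = x; rw [← h_mul, inv_mul_cancel, h_one]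
      continuous_toFun := h_homeo g
      continuous_invFun := h_homeo g⁻¹ }
  have he : ∀ (g : G), ⇑(e g) = fun x => act x g := fun g => rfl
  have himg : ∀ (g h : G) (s : Set X), e g '' (e h '' s) = e (h * g) '' s := by
    intro g h s
    rw [← Set.image_comp]
    apply Set.image_congr'
    intro x
    simp only [Function.comp, he, h_mul]
  -- compact neighborhood K ⊆ W
  obtain ⟨K, hKn, hKW, hKc⟩ := local_compact_nhds hW
  have hξK : ξ ∈ K := mem_of_mem_nhds hKn
  -- finite sets
  set F : Set G := {g : G | ((fun x => act x g) '' K ∩ K).Nonempty} with hF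
  have hFfin : F.Finite := h_proper K hKc
  set S : Set G := {g : G | act ξ g = ξ} with hS
  have hSfin : S.Finite := h_stab ξ
  have hS1 : (1 : G) ∈ S := h_one ξ
  have hSmul : ∀ {s t : G}, s ∈ S → t ∈ S → s * t ∈ S := by
    intro s t hs ht
    simp only [hS, Set.mem_setOf_eq] at *
    rw [h_mul, hs, ht]
  have hSinv : ∀ {s : G}, s ∈ S → s⁻¹ ∈ S := by
    intro s hs
    simp only [hS, Set.mem_setOf_eq] at *
    conv_lhs => rw [← hs, ← h_mul, mul_inv_cancel, h_one]
  -- separation data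
  have sep : ∀ g : G, ∃ A B : Set X, IsOpen A ∧ IsOpen B ∧ ξ ∈ A ∧
      (act ξ g ≠ ξ → act ξ g ∈ B ∧ Disjoint (closure A) (closure B)) := by
    intro g
    by_cases hg : act ξ g = ξ
    · exact ⟨Set.univ, Set.univ, isOpen_univ, isOpen_univ, trivial, fun h => absurd hg h⟩
    · obtain ⟨A, hξA, hA, B, hgB, hB, hd⟩ := exists_open_nhds_disjoint_closure (Ne.symm hg)
      exact ⟨A, B, hA, hB, hξA, fun _ => ⟨hgB, hd⟩⟩
  choose A B hAopen hBopen hξA hsep using sep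
  -- the basic neighborhood
  set V : Set X := interior K ∩ ⋂ g ∈ F \ S, (A g ∩ (fun x => act x g) ⁻¹' B g) with hV
  have hVopen : IsOpen V := by
    apply IsOpen.inter isOpen_interior
    apply (hFfin.subset Set.diff_subset).isOpen_biInter
    intro g _
    exact (hAopen g).inter ((hBopen g).preimage (h_homeo g))
  have hξV : ξ ∈ V := by
    refine ⟨mem_interior_iff_mem_nhds.mpr hKn, ?_⟩
    simp only [Set.mem_iInter]
    intro g hg
    exact ⟨hξA g, (hsep g hg.2).1⟩
  have hVK : V ⊆ K := fun x hx => interior_subset hx.1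
  -- the adapted set
  set U : Set X := ⋂ s ∈ S, e s '' V with hU
  have hUopen : IsOpen U := by
    apply hSfin.isOpen_biInter
    intro s _
    exact (e s).isOpen_image.mpr hVopen
  have hξU : ξ ∈ U := by
    simp only [hU, Set.mem_iInter]
    intro s hs
    exact ⟨ξ, hξV, hs⟩
  have hUV : U ⊆ V := by
    intro x hx
    have := Set.mem_iInter₂.mp hx 1 hS1
    obtain ⟨y, hy, hyx⟩ := this
    have hx1 : act y 1 = x := hyx
    rw [h_one] at hx1
    rwa [← hx1]
  have hUK : U ⊆ K := hUV.trans hVK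
  have hclU : closure U ⊆ K := closure_minimal hUK hKc.isClosed
  refine ⟨U, hUopen, hξU, fun x hx => hKW (hUK hx), hKc.of_isClosed_subset isClosed_closure hclU, ?_⟩
  intro g
  rw [← he g]
  by_cases hgS : g ∈ S
  · left
    rw [hU, Set.image_iInter₂ (e g).bijective]
    apply le_antisymm
    · intro x hx
      simp only [Set.mem_iInter] at hx ⊢
      intro t ht
      have h1 : t * g⁻¹ ∈ S := hSmul ht (hSinv hgS)
      have := hx (t * g⁻¹) h1
      rwa [himg, inv_mul_cancel_right] at this
    · intro x hx
      simp only [Set.mem_iInter] at hx ⊢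
      intro s hs
      rw [himg]
      exact hx (s * g) (hSmul hs hgS)
  · right
    by_cases hgF : g ∈ F
    · -- g moves ξ; use the separating sets
      have hgm : act ξ g ≠ ξ := hgS
      obtain ⟨hgB, hd⟩ := hsep g hgm
      have hUA : U ⊆ A g := by
        intro x hx
        have := (hUV hx).2
        exact (Set.mem_iInter₂.mp this g ⟨hgF, hgS⟩).1
      have hUgB : e g '' U ⊆ B g := by
        rintro _ ⟨x, hx, rfl⟩
        have := (hUV hx).2
        exact (Set.mem_iInter₂.mp this g ⟨hgF, hgS⟩).2
      exact hd.symm.mono (closure_mono hUgB) (closure_mono hUA)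
    · -- K·g misses K
      have hdisj : Disjoint (e g '' K) K := by
        rw [Set.disjoint_iff_inter_eq_empty, ← Set.not_nonempty_iff_eq_empty]
        exact hgF
      have h1 : closure (e g '' U) ⊆ e g '' K := by
        rw [← (e g).image_closure]
        exact Set.image_mono hclU
      exact hdisj.mono h1 hclU
end

section
/- A metrizable space X has covering dimension at most d if and only if every open cover U of X admits an open refinement V that can be partitioned as V = V_0 ∪ V_1 ∪ … ∪ V_d where for each i the elements of V_i are pairwise disjoint. -/
open Set TopologicalSpace

/-- The (Lebesgue) covering dimension of `Y` is at most `d`: every open cover admits an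
open refinement in which every point lies in at most `d + 1` sets. -/
def CovDimLE (Y : Type*) [TopologicalSpace Y] (d : ℕ) : Prop :=
  ∀ 𝒰 : Set (Set Y), (∀ U ∈ 𝒰, IsOpen U) → ⋃₀ 𝒰 = univ →
    ∃ 𝒱 : Set (Set Y), (∀ V ∈ 𝒱, IsOpen V) ∧ ⋃₀ 𝒱 = univ ∧
      (∀ V ∈ 𝒱, ∃ U ∈ 𝒰, V ⊆ U) ∧
      ∀ y : Y, {V | V ∈ 𝒱 ∧ y ∈ V}.Finite ∧ {V | V ∈ 𝒱 ∧ y ∈ V}.ncard ≤ d + 1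

/-- **Ostrand.** A metrizable space `X` has covering dimension at most `d`
if and only if every open cover of `X` admits an open refinement that can be
partitioned into `d + 1` families, each consisting of pairwise disjoint sets. -/
theorem covDimLE_iff_colored_refinement (X : Type*) [TopologicalSpace X]
    [MetrizableSpace X] (d : ℕ) :
    CovDimLE X d ↔
      ∀ 𝒰 : Set (Set X), (∀ U ∈ 𝒰, IsOpen U) → ⋃₀ 𝒰 = univ →
        ∃ 𝒱 : Fin (d + 1) → Set (Set X),
          (∀ i, ∀ V ∈ 𝒱 i, IsOpen V) ∧
          ⋃₀ (⋃ i, 𝒱 i) = univ ∧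
          (∀ i, ∀ V ∈ 𝒱 i, ∃ U ∈ 𝒰, V ⊆ U) ∧
          ∀ i, (𝒱 i).Pairwise Disjoint := by
  classical
  letI : MetricSpace X := TopologicalSpace.metrizableSpaceMetric X
  constructor
  · -- forward direction
    intro h 𝒰 hUo hUc
    obtain ⟨𝒱, hVo, hVc, hVr, hVm⟩ := h 𝒰 hUo hUc
    -- the trace of a point: the members of 𝒱 containing it
    set tr : X → Set (Set X) := fun x => {V | V ∈ 𝒱 ∧ x ∈ V} with htr
    have htrfin : ∀ x, (tr x).Finite := fun x => (hVm x).1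
    have htrcard : ∀ x, (tr x).ncard ≤ d + 1 := fun x => (hVm x).2
    have htrsub : ∀ x, tr x ⊆ 𝒱 := fun x V hV => hV.1
    -- basic constructions
    set O : Finset (Set X) → Set X := fun T => ⋂ V ∈ T, V with hO
    set VT : Finset (Set X) → Set X := fun T => {x | tr x = ↑T} with hVTdef
    set Z : Finset (Set X) → Set X :=
      fun T => {x | tr x ≠ ↑T ∧ (tr x).ncard = T.card} with hZ
    set G : Finset (Set X) → Set X :=
      fun T => O T ∩ {x | EMetric.infEdist x (VT T) < EMetric.infEdist x (Z T)} with hG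
    have hOopen : ∀ T : Finset (Set X), ↑T ⊆ 𝒱 → IsOpen (O T) := by
      intro T hT
      exact isOpen_biInter_finset fun V hV => hVo V (hT hV)
    have hOmem : ∀ T : Finset (Set X), ∀ x, (∀ V ∈ T, x ∈ V) → x ∈ O T := by
      intro T x hx
      exact mem_iInter₂.2 hx
    -- key disjointness of O T and Z T
    have hOZ : ∀ T : Finset (Set X), ↑T ⊆ 𝒱 → O T ∩ Z T = ∅ := by
      intro T hT
      ext y
      simp only [mem_inter_iff, mem_empty_iff_false, iff_false, not_and]
      intro hyO hyZ
      have hsub : (T : Set (Set X)) ⊆ tr y := by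
        intro V hV
        exact ⟨hT hV, mem_iInter₂.1 hyO V hV⟩
      have heq : (T : Set (Set X)) = tr y := by
        apply Set.eq_of_subset_of_ncard_le hsub _ (htrfin y)
        rw [Set.ncard_coe_finset]
        exact hyZ.2.le
      exact hyZ.1 heq.symm
    -- points of V T lie in G T
    have hVTG : ∀ T : Finset (Set X), ∀ x, x ∈ VT T → x ∈ G T := by
      intro T x hx
      have hxT : tr x = ↑T := hx
      have hTsub : (T : Set (Set X)) ⊆ 𝒱 := hxT ▸ htrsub x
      have hxO : x ∈ O T := hOmem T x fun V hV => (hxT ▸ (Finset.mem_coe.2 hV : V ∈ (T : Set (Set X))) : V ∈ tr x).2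
      refine ⟨hxO, ?_⟩
      have h1 : EMetric.infEdist x (VT T) = 0 := EMetric.infEdist_zero_of_mem hx
      have h2 : EMetric.infEdist x (Z T) ≠ 0 := by
        intro h0
        have hcl : x ∈ closure (Z T) := EMetric.mem_closure_iff_infEdist_zero.2 h0
        obtain ⟨y, hyO, hyZ⟩ := (mem_closure_iff.1 hcl) (O T) (hOopen T hTsub) hxO
        have := hOZ T hTsub
        have : y ∈ (∅ : Set X) := this ▸ mem_inter hyO hyZ
        exact this.elim
      show EMetric.infEdist x (VT T) < EMetric.infEdist x (Z T)
      rw [h1]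
      exact pos_iff_ne_zero.2 h2
    -- `VT T' ⊆ Z T` whenever `T ≠ T'` have the same cardinality
    have hVTZ : ∀ T T' : Finset (Set X), T ≠ T' → T.card = T'.card → VT T' ⊆ Z T := by
      intro T T' hne hcard x hx
      have hxT : tr x = ↑T' := hx
      refine ⟨?_, ?_⟩
      · rw [hxT]
        exact fun hEq => hne (Finset.coe_injective hEq).symm
      · rw [hxT, Set.ncard_coe_finset, hcard]
    -- the colored families
    refine ⟨fun i => {s | ∃ T : Finset (Set X), ↑T ⊆ 𝒱 ∧ T.card = (i : ℕ) + 1 ∧ s = G T},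
      ?_, ?_, ?_, ?_⟩
    · rintro i s ⟨T, hT𝒱, hcard, rfl⟩
      exact (hOopen T hT𝒱).inter
        (isOpen_lt EMetric.continuous_infEdist EMetric.continuous_infEdist)
    · apply eq_univ_of_forall
      intro x
      have hxN : (tr x).Nonempty := by
        have : x ∈ ⋃₀ 𝒱 := hVc ▸ mem_univ x
        obtain ⟨V, hV, hxV⟩ := this
        exact ⟨V, hV, hxV⟩
      have hk1 : 1 ≤ (tr x).ncard := (Set.ncard_pos (htrfin x)).2 hxN
      set k := (tr x).ncard with hk
      set T : Finset (Set X) := (htrfin x).toFinset with hT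
      have hTcard : T.card = k := by
        rw [hT, hk, Set.ncard_eq_toFinset_card (tr x) (htrfin x)]
      have hTcoe : (T : Set (Set X)) = tr x := (htrfin x).coe_toFinset
      have hi : k - 1 < d + 1 := by
        have := htrcard x
        omega
      refine mem_sUnion.2 ⟨G T, mem_iUnion.2 ⟨⟨k - 1, hi⟩, T, ?_, ?_, rfl⟩, ?_⟩
      · rw [hTcoe]; exact htrsub x
      · simp only [hTcard]; omega
      · exact hVTG T x (by rw [hVTdef]; exact hTcoe.symm)
    · rintro i s ⟨T, hT𝒱, hcard, rfl⟩
      have hTne : T.Nonempty := Finset.card_pos.1 (by omega)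
      obtain ⟨V, hVT⟩ := hTne
      obtain ⟨U, hU, hVU⟩ := hVr V (hT𝒱 hVT)
      refine ⟨U, hU, ?_⟩
      intro x hx
      exact hVU (mem_iInter₂.1 hx.1 V hVT)
    · intro i
      rintro s ⟨T, hT𝒱, hcard, rfl⟩ s' ⟨T', hT'𝒱, hcard', rfl⟩ hne
      have hTT' : T ≠ T' := fun hEq => hne (by rw [hEq])
      have hcc : T.card = T'.card := by rw [hcard, hcard']
      rw [Set.disjoint_left]
      intro x hx hx'
      have h1 : EMetric.infEdist x (Z T) ≤ EMetric.infEdist x (VT T') :=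
        EMetric.infEdist_anti (hVTZ T T' hTT' hcc)
      have h2 : EMetric.infEdist x (Z T') ≤ EMetric.infEdist x (VT T) :=
        EMetric.infEdist_anti (hVTZ T' T hTT'.symm hcc.symm)
      have := lt_of_lt_of_le hx.2 h1
      have := lt_of_lt_of_le hx'.2 h2
      exact absurd (lt_trans (lt_of_lt_of_le hx.2 h1) (lt_of_lt_of_le hx'.2 h2))
        (lt_irrefl _)
  · -- reverse direction
    intro h 𝒰 hUo hUc
    obtain ⟨𝒲, hWo, hWc, hWr, hWd⟩ := h 𝒰 hUo hUc
    refine ⟨⋃ i, 𝒲 i, ?_, hWc, ?_, ?_⟩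
    · intro V hV
      obtain ⟨i, hi⟩ := mem_iUnion.1 hV
      exact hWo i V hi
    · intro V hV
      obtain ⟨i, hi⟩ := mem_iUnion.1 hV
      exact hWr i V hi
    · intro y
      set s : Set (Set X) := {V | V ∈ ⋃ i, 𝒲 i ∧ y ∈ V} with hs
      set f : Set X → Fin (d + 1) :=
        fun V => if h : ∃ i, V ∈ 𝒲 i then h.choose else 0 with hf
      have hfspec : ∀ V ∈ s, V ∈ 𝒲 (f V) := by
        intro V hV
        have hex : ∃ i, V ∈ 𝒲 i := mem_iUnion.1 hV.1
        rw [hf]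
        simp only [dif_pos hex]
        exact hex.choose_spec
      have hinj : Set.InjOn f s := by
        intro V hV W hW hfVW
        by_contra hne
        have hVi : V ∈ 𝒲 (f V) := hfspec V hV
        have hWi : W ∈ 𝒲 (f V) := hfVW ▸ hfspec W hW
        have hdis : Disjoint V W := hWd (f V) hVi hWi hne
        exact (Set.disjoint_left.1 hdis hV.2) hW.2
      have hfin : s.Finite := Set.Finite.of_finite_image (Set.toFinite _) hinj
      refine ⟨hfin, ?_⟩
      calc s.ncard ≤ (univ : Set (Fin (d + 1))).ncard :=
            Set.ncard_le_ncard_of_injOn f (fun a _ => mem_univ _) hinj (Set.toFinite _)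
        _ = d + 1 := by simp [Set.ncard_univ]
end

section
/- The covering dimension of an inverse limit of an inverse sequence of compact metrizable spaces X_n is at most the supremum of the covering dimensions of the X_n. -/
open Set TopologicalSpace

section Aux

variable {X : ℕ → Type*} [∀ n, TopologicalSpace (X n)]

/-- Transition maps of the inverse system. -/
def invTr (p : ∀ n, X (n + 1) → X n) {m n : ℕ} (h : m ≤ n) : X n → X m :=
  Nat.leRecOn (C := fun k => X k → X m) h (fun {k} f => f ∘ p k) id

lemma invTr_self (p : ∀ n, X (n + 1) → X n) (m : ℕ) : invTr p (le_refl m) = id :=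
  Nat.leRecOn_self _

lemma invTr_succ (p : ∀ n, X (n + 1) → X n) {m n : ℕ} (h : m ≤ n) :
    invTr p (h.trans (Nat.le_succ n)) = invTr p h ∘ p n :=
  Nat.leRecOn_succ (C := fun k => X k → X m) h id

lemma invTr_continuous (p : ∀ n, X (n + 1) → X n) (hp : ∀ n, Continuous (p n))
    {m n : ℕ} (h : m ≤ n) : Continuous (invTr p h) := by
  induction n, h using Nat.le_induction with
  | base => rw [invTr_self]; exact continuous_id
  | succ n h ih => rw [invTr_succ]; exact ih.comp (hp n)

lemma invTr_apply (p : ∀ n, X (n + 1) → X n) (x : ∀ n, X n)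
    (hx : ∀ n, p n (x (n + 1)) = x n) {m n : ℕ} (h : m ≤ n) :
    invTr p h (x n) = x m := by
  induction n, h using Nat.le_induction with
  | base => rw [invTr_self]; rfl
  | succ n h ih =>
    have := congrFun (invTr_succ p h) (x (n + 1))
    rw [this]; simp only [Function.comp_apply, hx n, ih]

/-- Basis lemma: sets of the form `{y | y.1 N ∈ W}` with `W` open form a basis
of the inverse limit. -/
lemma invLimit_basis (p : ∀ n, X (n + 1) → X n) (hp : ∀ n, Continuous (p n))
    (O : Set {x : ∀ n, X n // ∀ n, p n (x (n + 1)) = x n}) (hO : IsOpen O)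
    (x : {x : ∀ n, X n // ∀ n, p n (x (n + 1)) = x n}) (hx : x ∈ O) :
    ∃ (N : ℕ) (W : Set (X N)), IsOpen W ∧ x.1 N ∈ W ∧
      {y : {x : ∀ n, X n // ∀ n, p n (x (n + 1)) = x n} | y.1 N ∈ W} ⊆ O := by
  obtain ⟨O', hO', rfl⟩ := isOpen_induced_iff.mp hO
  obtain ⟨I, u, hIu, hsub⟩ := isOpen_pi_iff.mp hO' x.1 hx
  set N := I.sup id with hN
  have hle : ∀ i ∈ I, i ≤ N := fun i hi => Finset.le_sup (f := id) hi
  set u' : ℕ → Set (X N) := fun i =>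
    if h : i ∈ I then invTr p (hle i h) ⁻¹' u i else univ with hu'
  refine ⟨N, ⋂ i ∈ I, u' i, ?_, ?_, ?_⟩
  · refine isOpen_biInter_finset fun i hi => ?_
    simp only [hu', dif_pos hi]
    exact (hIu i hi).1.preimage (invTr_continuous p hp _)
  · refine mem_iInter₂.mpr fun i hi => ?_
    simp only [hu', dif_pos hi, mem_preimage]
    rw [invTr_apply p x.1 x.2]
    exact (hIu i hi).2
  · intro y hy
    refine hsub ?_
    intro i hi
    have hi' : i ∈ I := Finset.mem_coe.mp hi
    have h2 := mem_iInter₂.mp hy i hi'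
    rw [hu'] at h2
    simp only [dif_pos hi', mem_preimage] at h2
    rwa [invTr_apply p y.1 y.2] at h2

lemma invLimit_compactSpace [∀ n, CompactSpace (X n)] [∀ n, T2Space (X n)]
    (p : ∀ n, X (n + 1) → X n) (hp : ∀ n, Continuous (p n)) :
    CompactSpace {x : ∀ n, X n // ∀ n, p n (x (n + 1)) = x n} := by
  have hcl : IsClosed {x : ∀ n, X n | ∀ n, p n (x (n + 1)) = x n} := by
    have heq : {x : ∀ n, X n | ∀ n, p n (x (n + 1)) = x n} =
        ⋂ n, {x : ∀ n, X n | p n (x (n + 1)) = x n} := by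
      ext x; simp [Set.mem_iInter]
    rw [heq]
    exact isClosed_iInter fun n =>
      isClosed_eq ((hp n).comp (continuous_apply _)) (continuous_apply _)
  exact isCompact_iff_compactSpace.mp hcl.isCompact

end Aux

/-- The covering dimension of the inverse limit of an inverse sequence
of compact metrizable spaces is at most the supremum of their covering dimensions:
if every `X n` has covering dimension at most `d`, then so does the inverse limit. -/
theorem covDim_inverse_limit_le (X : ℕ → Type*) [∀ n, TopologicalSpace (X n)]
    [∀ n, CompactSpace (X n)] [∀ n, MetrizableSpace (X n)]
    (p : ∀ n, X (n + 1) → X n) (hp : ∀ n, Continuous (p n)) (d : ℕ)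
    (hd : ∀ n, CovDimLE (X n) d) :
    CovDimLE {x : ∀ n, X n // ∀ n, p n (x (n + 1)) = x n} d := by
  haveI : CompactSpace {x : ∀ n, X n // ∀ n, p n (x (n + 1)) = x n} :=
    invLimit_compactSpace p hp
  classical
  intro 𝒰 hUo hUc
  -- for every point choose a basic neighbourhood contained in a member of 𝒰
  have hx : ∀ x : {x : ∀ n, X n // ∀ n, p n (x (n + 1)) = x n},
      ∃ (N : ℕ) (W : Set (X N)) (U : Set {x : ∀ n, X n // ∀ n, p n (x (n + 1)) = x n}),
        IsOpen W ∧ x.1 N ∈ W ∧ U ∈ 𝒰 ∧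
        {y : {x : ∀ n, X n // ∀ n, p n (x (n + 1)) = x n} | y.1 N ∈ W} ⊆ U := by
    intro x
    have hxU : x ∈ ⋃₀ 𝒰 := by rw [hUc]; trivial
    obtain ⟨U, hU, hxU⟩ := hxU
    obtain ⟨N, W, hWo, hxW, hsub⟩ := invLimit_basis p hp U (hUo U hU) x hxU
    exact ⟨N, W, U, hWo, hxW, hU, hsub⟩
  choose Nf Wf Uf hWo hxW hUf hsub using hx
  -- extract a finite subcover by basic sets
  have hBo : ∀ x : {x : ∀ n, X n // ∀ n, p n (x (n + 1)) = x n},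
      IsOpen {y : {x : ∀ n, X n // ∀ n, p n (x (n + 1)) = x n} | y.1 (Nf x) ∈ Wf x} :=
    fun x => (hWo x).preimage ((continuous_apply (Nf x)).comp continuous_subtype_val)
  obtain ⟨t, ht⟩ := isCompact_univ.elim_finite_subcover
    (fun x : {x : ∀ n, X n // ∀ n, p n (x (n + 1)) = x n} =>
      {y : {x : ∀ n, X n // ∀ n, p n (x (n + 1)) = x n} | y.1 (Nf x) ∈ Wf x})
    hBo (fun y _ => mem_iUnion.mpr ⟨y, hxW y⟩)
  set M := t.sup Nf with hM
  have hleM : ∀ x ∈ t, Nf x ≤ M := fun x hx => Finset.le_sup (f := Nf) hx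
  set πM : {x : ∀ n, X n // ∀ n, p n (x (n + 1)) = x n} → X M := fun y => y.1 M with hπM
  have hπMc : Continuous πM := (continuous_apply M).comp continuous_subtype_val
  set W'' : {x : ∀ n, X n // ∀ n, p n (x (n + 1)) = x n} → Set (X M) := fun x =>
    if h : x ∈ t then invTr p (hleM x h) ⁻¹' Wf x else ∅ with hW''
  have hW''key : ∀ x ∈ t, πM ⁻¹' (W'' x) = {y | y.1 (Nf x) ∈ Wf x} := by
    intro x hxt
    ext y
    simp only [hW'', dif_pos hxt, mem_preimage, mem_setOf_eq, hπM]
    rw [invTr_apply p y.1 y.2]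
  -- the cover of X M
  set 𝒞 : Set (Set (X M)) := insert (Set.range πM)ᶜ (W'' '' ↑t) with h𝒞
  have hrange : IsClosed (Set.range πM) := (isCompact_range hπMc).isClosed
  have h𝒞o : ∀ C ∈ 𝒞, IsOpen C := by
    intro C hC
    rcases hC with rfl | ⟨x, hxt, rfl⟩
    · exact hrange.isOpen_compl
    · simp only [hW'', dif_pos (Finset.mem_coe.mp hxt)]
      exact (hWo x).preimage (invTr_continuous p hp _)
  have h𝒞c : ⋃₀ 𝒞 = univ := by
    ext z
    simp only [mem_univ, iff_true, mem_sUnion]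
    by_cases hz : z ∈ Set.range πM
    · obtain ⟨y, rfl⟩ := hz
      have : y ∈ ⋃ x ∈ t, {w : {x : ∀ n, X n // ∀ n, p n (x (n + 1)) = x n} |
          w.1 (Nf x) ∈ Wf x} := ht (mem_univ y)
      obtain ⟨x, hxt, hyx⟩ := mem_iUnion₂.mp this
      refine ⟨W'' x, Or.inr ⟨x, hxt, rfl⟩, ?_⟩
      exact mem_preimage.mp ((hW''key x hxt).symm ▸ hyx)
    · exact ⟨(Set.range πM)ᶜ, Or.inl rfl, hz⟩
  obtain ⟨𝒱₀, h1, h2, h3, h4⟩ := hd M 𝒞 h𝒞o h𝒞c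
  -- pull back the refinement
  refine ⟨{S | ∃ V ∈ 𝒱₀, S = πM ⁻¹' V ∧ S.Nonempty}, ?_, ?_, ?_, ?_⟩
  · rintro S ⟨V, hV, rfl, -⟩
    exact (h1 V hV).preimage hπMc
  · ext z
    simp only [mem_univ, iff_true, mem_sUnion]
    have : πM z ∈ ⋃₀ 𝒱₀ := by rw [h2]; trivial
    obtain ⟨V, hV, hzV⟩ := this
    exact ⟨πM ⁻¹' V, ⟨V, hV, rfl, ⟨z, hzV⟩⟩, hzV⟩
  · rintro S ⟨V, hV, rfl, hne⟩
    obtain ⟨C, hC, hVC⟩ := h3 V hV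
    rcases hC with rfl | ⟨x, hxt, rfl⟩
    · exfalso
      obtain ⟨z, hz⟩ := hne
      exact (hVC hz) (mem_range_self z)
    · refine ⟨Uf x, hUf x, ?_⟩
      intro y hy
      apply hsub x
      rw [← hW''key x hxt]
      exact hVC hy
  · intro z
    have h4z := h4 (πM z)
    have hsub' : {S | S ∈ {S | ∃ V ∈ 𝒱₀, S = πM ⁻¹' V ∧ S.Nonempty} ∧ z ∈ S} ⊆
        (fun V => πM ⁻¹' V) '' {V | V ∈ 𝒱₀ ∧ πM z ∈ V} := by
      rintro S ⟨⟨V, hV, rfl, -⟩, hzS⟩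
      exact ⟨V, ⟨hV, hzS⟩, rfl⟩
    refine ⟨(h4z.1.image _).subset hsub', ?_⟩
    calc {S | S ∈ {S | ∃ V ∈ 𝒱₀, S = πM ⁻¹' V ∧ S.Nonempty} ∧ z ∈ S}.ncard
        ≤ ((fun V => πM ⁻¹' V) '' {V | V ∈ 𝒱₀ ∧ πM z ∈ V}).ncard :=
          Set.ncard_le_ncard hsub' (h4z.1.image _)
      _ ≤ {V | V ∈ 𝒱₀ ∧ πM z ∈ V}.ncard := Set.ncard_image_le h4z.1
      _ ≤ d + 1 := h4z.2
end

section
/- Let I : A → B be an affine map between geometric realizations of simplices (with ℓ¹ metric on barycentric coordinates) sending each vertex u_i of A to the barycenter b_i of a face B_i of B, and suppose there is a vertex of B contained in every face B_i. Then I is Lipschitz with constant (|B|-1)/|B|, where |B| is the number of vertices of B; in particular I is a strict contraction. -/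
open Finset

/-- Let `I` be the affine map between geometric realizations of
simplices (with the `ℓ¹` metric on barycentric coordinates) sending each vertex
`v` of the source simplex (vertex set `V`) to the barycenter `b v` of a face
`B v` of the target simplex (vertex set `W`). If some vertex `w₀` of the target
lies in every face `B v`, then `I` is Lipschitz with constant
`(|W| - 1)/|W|`; in particular, `I` is a strict contraction. -/
theorem affine_barycenter_map_contracts {V W : Type*} [Fintype V] [Fintype W] [DecidableEq W]
    (B : V → Finset W) (hB : ∀ v, (B v).Nonempty)
    (w₀ : W) (hw₀ : ∀ v, w₀ ∈ B v)
    (b : V → W → ℝ)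
    (hb : ∀ v w, b v w = if w ∈ B v then (1 : ℝ) / (B v).card else 0)
    (x y : V → ℝ)
    (hx0 : ∀ v, 0 ≤ x v) (hx1 : ∑ v, x v = 1)
    (hy0 : ∀ v, 0 ≤ y v) (hy1 : ∑ v, y v = 1) :
    ∑ w, |(∑ v, x v * b v w) - ∑ v, y v * b v w| ≤
      ((Fintype.card W - 1 : ℝ) / Fintype.card W) * ∑ v, |x v - y v| := by
  classical
  set n : ℕ := Fintype.card W with hn
  have hn1 : 1 ≤ n := Fintype.card_pos_iff.mpr ⟨w₀⟩
  have hnR : (0 : ℝ) < n := by exact_mod_cast hn1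
  set d : V → ℝ := fun v => x v - y v with hd
  set f : W → ℝ := fun w => ∑ v, d v * b v w with hf
  have hfw : ∀ w, (∑ v, x v * b v w) - ∑ v, y v * b v w = f w := by
    intro w
    simp [hf, hd, ← Finset.sum_sub_distrib, sub_mul]
  have hb0 : ∀ v w, 0 ≤ b v w := by
    intro v w; rw [hb]; positivity
  have hcard : ∀ v, (0 : ℝ) < (B v).card := by
    intro v; exact_mod_cast (hB v).card_pos
  have hbsum : ∀ v, ∑ w, b v w = 1 := by
    intro v
    simp only [hb]
    rw [Finset.sum_ite_mem, Finset.univ_inter, Finset.sum_const, nsmul_eq_mul]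
    field_simp
  have hbw0 : ∀ v, (1 : ℝ) / n ≤ b v w₀ := by
    intro v
    rw [hb, if_pos (hw₀ v)]
    apply one_div_le_one_div_of_le (hcard v)
    exact_mod_cast Finset.card_le_univ (B v)
  set p : V → ℝ := fun v => (d v)⁺ with hp
  set q : V → ℝ := fun v => (d v)⁻ with hq
  have hp0 : ∀ v, 0 ≤ p v := fun v => posPart_nonneg _
  have hq0 : ∀ v, 0 ≤ q v := fun v => negPart_nonneg _
  set D : ℝ := ∑ v, |d v| with hD
  have hdsum : ∑ v, d v = 0 := by
    simp [hd, Finset.sum_sub_distrib, hx1, hy1]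
  have h1 : (∑ v, p v) - ∑ v, q v = 0 := by
    rw [← Finset.sum_sub_distrib]
    simp only [hp, hq, posPart_sub_negPart]
    exact hdsum
  have h2 : (∑ v, p v) + ∑ v, q v = D := by
    rw [← Finset.sum_add_distrib]
    simp only [hp, hq, posPart_add_negPart, hD]
  have hSp : ∑ v, p v = D / 2 := by linarith
  have hSq : ∑ v, q v = D / 2 := by linarith
  set P : ℝ := ∑ v, p v * b v w₀ with hP
  set N : ℝ := ∑ v, q v * b v w₀ with hN
  have hfw0 : f w₀ = P - N := by
    rw [hf, hP, hN, ← Finset.sum_sub_distrib]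
    refine Finset.sum_congr rfl fun v _ => ?_
    rw [← sub_mul]
    simp [hp, hq, posPart_sub_negPart]
  have hPge : D / (2 * n) ≤ P := by
    calc D / (2 * n) = ∑ v, p v * (1 / n) := by
          rw [← Finset.sum_mul, hSp]; ring
      _ ≤ P := Finset.sum_le_sum fun v _ =>
          mul_le_mul_of_nonneg_left (hbw0 v) (hp0 v)
  have hNge : D / (2 * n) ≤ N := by
    calc D / (2 * n) = ∑ v, q v * (1 / n) := by
          rw [← Finset.sum_mul, hSq]; ring
      _ ≤ N := Finset.sum_le_sum fun v _ =>
          mul_le_mul_of_nonneg_left (hbw0 v) (hq0 v)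
  -- positive part bound for each w
  have hfpos : ∀ w, (f w)⁺ ≤ ∑ v, p v * b v w := by
    intro w
    rw [posPart_def]
    apply sup_le
    · refine Finset.sum_le_sum fun v _ => ?_
      exact mul_le_mul_of_nonneg_right (le_posPart _) (hb0 v w)
    · exact Finset.sum_nonneg fun v _ => mul_nonneg (hp0 v) (hb0 v w)
  -- full double sum
  have hdouble : ∑ w, ∑ v, p v * b v w = D / 2 := by
    rw [Finset.sum_comm]
    calc ∑ v, ∑ w, p v * b v w = ∑ v, p v * ∑ w, b v w := by
          simp [Finset.mul_sum]
      _ = D / 2 := by simp [hbsum, hSp]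
  have hsum0 : ∑ w, f w = 0 := by
    rw [hf, Finset.sum_comm]
    calc ∑ v, ∑ w, d v * b v w = ∑ v, d v * ∑ w, b v w := by
          simp [Finset.mul_sum]
      _ = 0 := by simp [hbsum, hdsum]
  -- |a| = 2 a⁺ - a
  have habs : ∀ a : ℝ, |a| = 2 * a⁺ - a := by
    intro a
    have h1 := posPart_add_negPart a
    have h2 := posPart_sub_negPart a
    linarith
  have hT : ∑ w, |f w| = 2 * ∑ w, (f w)⁺ := by
    calc ∑ w, |f w| = ∑ w, (2 * (f w)⁺ - f w) := by
          refine Finset.sum_congr rfl fun w _ => habs (f w)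
      _ = 2 * ∑ w, (f w)⁺ := by
          rw [Finset.sum_sub_distrib, hsum0, Finset.mul_sum]; ring
  -- split off w₀
  have hsplit : (∑ w ∈ Finset.univ.erase w₀, (f w)⁺) + (f w₀)⁺ = ∑ w, (f w)⁺ :=
    Finset.sum_erase_add _ _ (Finset.mem_univ w₀)
  have hsplit2 : (∑ w ∈ Finset.univ.erase w₀, ∑ v, p v * b v w) + P = D / 2 := by
    rw [hP, Finset.sum_erase_add _ _ (Finset.mem_univ w₀)]
    exact hdouble
  have hrest : ∑ w ∈ Finset.univ.erase w₀, (f w)⁺ ≤ D / 2 - P := by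
    have := Finset.sum_le_sum (fun w (_ : w ∈ Finset.univ.erase w₀) => hfpos w)
    linarith
  have hfw0pos : (f w₀)⁺ ≤ P - min P N := by
    rw [posPart_def]
    apply sup_le
    · rw [hfw0]
      have := min_le_right P N
      linarith
    · have := min_le_left P N
      linarith
  have hmin : D / (2 * n) ≤ min P N := le_min hPge hNge
  have hposbound : ∑ w, (f w)⁺ ≤ D / 2 - D / (2 * n) := by
    rw [← hsplit]
    have : min P N ≥ D / (2 * n) := hmin
    linarith
  have hDnonneg : 0 ≤ D := Finset.sum_nonneg fun v _ => abs_nonneg _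
  have key : ∑ w, |f w| ≤ ((n : ℝ) - 1) / n * D := by
    rw [hT]
    have heq : ((n : ℝ) - 1) / n * D = 2 * (D / 2 - D / (2 * n)) := by
      field_simp
    rw [heq]
    linarith
  calc ∑ w, |(∑ v, x v * b v w) - ∑ v, y v * b v w| = ∑ w, |f w| := by
        refine Finset.sum_congr rfl fun w _ => by rw [hfw w]
    _ ≤ ((n : ℝ) - 1) / n * D := key
    _ = ((Fintype.card W - 1 : ℝ) / Fintype.card W) * ∑ v, |x v - y v| := by
        rw [hn, hD]
end

section
/- In the self-similar group acting on {0,1}* defined by the wreath recursion a = σ(1, b), b = (1, a) over the free group F(a,b) (where σ is the transposition of {0,1}), the sections satisfy: a² = (b, b), b² = (1, a²), ab = σ(1, ba), ba = σ(a, b), ab⁻¹ = σ(1, ba⁻¹), ba⁻¹ = σ(ab⁻¹, 1), and this wreath recursion on the free group is contracting with nucleus contained in {1, a, a⁻¹, b, b⁻¹, ab⁻¹, ba⁻¹}. -/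
/-- Extension of the section maps from letters to words:
`g|_{x v} = (g|_x)|_v`. -/
def secW {G X : Type*} (s : G → X → G) : G → List X → G
  | g, [] => g
  | g, x :: v => secW s (s g x) v

/-- The action of a group element on words induced by `ρ` and `s`. -/
def actW {G X : Type*} (ρ : G → Equiv.Perm X) (s : G → X → G) : G → List X → List X
  | _, [] => []
  | g, x :: v => ρ g x :: actW ρ s (s g x) v

theorem actW_length {G X : Type*} (ρ : G → Equiv.Perm X) (s : G → X → G) :
    ∀ (v : List X) (g : G), (actW ρ s g v).length = v.length := by
  intro v
  induction v with
  | nil => intro g; rfl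
  | cons x v ih => intro g; simp [actW, ih]

theorem secW_append {G X : Type*} (s : G → X → G) :
    ∀ (u v : List X) (g : G), secW s g (u ++ v) = secW s (secW s g u) v := by
  intro u
  induction u with
  | nil => intro v g; rfl
  | cons x u ih => intro v g; simp [secW, ih]

theorem secW_mul {G X : Type*} [Group G] (ρ : G → Equiv.Perm X) (s : G → X → G)
    (hs_mul : ∀ g h x, s (g * h) x = s g (ρ h x) * s h x) :
    ∀ (v : List X) (g h : G),
      secW s (g * h) v = secW s g (actW ρ s h v) * secW s h v := by
  intro v
  induction v with
  | nil => intro g h; rfl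
  | cons x v ih =>
    intro g h
    simp only [secW, actW, hs_mul, ih]

/-- Consider the wreath recursion `a = σ(1, b)`, `b = (1, a)` over
the free group `F(a,b)` (on the alphabet `{0,1}`, `σ` the transposition), given by a
root-permutation map `ρ` and a section map `s` compatible with multiplication. Then
`a² = (b, b)`, `b² = (1, a²)`, `ab = σ(1, ba)`, `ba = σ(a, b)`, `ab⁻¹ = σ(1, ba⁻¹)`,
`ba⁻¹ = σ(ab⁻¹, 1)`, and the recursion is contracting on the free group with nucleus
contained in `{1, a, a⁻¹, b, b⁻¹, ab⁻¹, ba⁻¹}`. -/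
theorem basilica_free_recursion_contracting
    (ρ : FreeGroup Bool → Equiv.Perm (Fin 2))
    (s : FreeGroup Bool → Fin 2 → FreeGroup Bool)
    (a b : FreeGroup Bool)
    (ha : a = FreeGroup.of true) (hb : b = FreeGroup.of false)
    (hρ_one : ρ 1 = 1)
    (hρ_mul : ∀ g h, ρ (g * h) = ρ g * ρ h)
    (hs_one : ∀ x, s 1 x = 1)
    (hs_mul : ∀ g h x, s (g * h) x = s g (ρ h x) * s h x)
    (hρa : ρ a = Equiv.swap 0 1) (hsa0 : s a 0 = 1) (hsa1 : s a 1 = b)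
    (hρb : ρ b = 1) (hsb0 : s b 0 = 1) (hsb1 : s b 1 = a) :
    (ρ (a * a) = 1 ∧ s (a * a) 0 = b ∧ s (a * a) 1 = b) ∧
    (ρ (b * b) = 1 ∧ s (b * b) 0 = 1 ∧ s (b * b) 1 = a * a) ∧
    (ρ (a * b) = Equiv.swap 0 1 ∧ s (a * b) 0 = 1 ∧ s (a * b) 1 = b * a) ∧
    (ρ (b * a) = Equiv.swap 0 1 ∧ s (b * a) 0 = a ∧ s (b * a) 1 = b) ∧
    (ρ (a * b⁻¹) = Equiv.swap 0 1 ∧ s (a * b⁻¹) 0 = 1 ∧ s (a * b⁻¹) 1 = b * a⁻¹) ∧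
    (ρ (b * a⁻¹) = Equiv.swap 0 1 ∧ s (b * a⁻¹) 0 = a * b⁻¹ ∧ s (b * a⁻¹) 1 = 1) ∧
    (∀ g : FreeGroup Bool, ∃ n : ℕ, ∀ v : List (Fin 2), n ≤ v.length →
      secW s g v ∈ ({1, a, a⁻¹, b, b⁻¹, a * b⁻¹, b * a⁻¹} : Set (FreeGroup Bool))) := by
  -- inverse formulas
  have hρ_inv : ∀ g, ρ g⁻¹ = (ρ g)⁻¹ := by
    intro g
    have h := hρ_mul g g⁻¹
    rw [mul_inv_cancel, hρ_one] at h
    exact eq_inv_of_mul_eq_one_right h.symm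
  have hs_inv : ∀ g x, s g⁻¹ x = (s g ((ρ g)⁻¹ x))⁻¹ := by
    intro g x
    have h := hs_mul g g⁻¹ x
    rw [mul_inv_cancel, hs_one, hρ_inv] at h
    exact eq_inv_of_mul_eq_one_right h.symm
  have hρA : ρ a⁻¹ = Equiv.swap 0 1 := by
    rw [hρ_inv, hρa, Equiv.swap_inv]
  have hρB : ρ b⁻¹ = 1 := by rw [hρ_inv, hρb]; rfl
  have hsA0 : s a⁻¹ 0 = b⁻¹ := by
    rw [hs_inv, hρa]
    norm_num [Equiv.swap_apply_left, Equiv.swap_apply_right, hsa1]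
  have hsA1 : s a⁻¹ 1 = 1 := by
    rw [hs_inv, hρa]
    norm_num [Equiv.swap_apply_left, Equiv.swap_apply_right, hsa0]
  have hsB0 : s b⁻¹ 0 = 1 := by
    rw [hs_inv, hρb]; norm_num [hsb0]
  have hsB1 : s b⁻¹ 1 = a⁻¹ := by
    rw [hs_inv, hρb]; norm_num [hsb1]
  subst ha hb
  refine ⟨?_, ?_, ?_, ?_, ?_, ?_, ?_⟩
  · refine ⟨?_, ?_, ?_⟩ <;>
      simp [hρ_mul, hs_mul, hρa, hsa0, hsa1]
  · refine ⟨?_, ?_, ?_⟩ <;> simp [hρ_mul, hs_mul, hρb, hsb0, hsb1]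
  · refine ⟨?_, ?_, ?_⟩ <;> simp [hρ_mul, hs_mul, hρa, hρb, hsa0, hsa1, hsb0, hsb1]
  · refine ⟨?_, ?_, ?_⟩ <;>
      simp [hρ_mul, hs_mul, hρa, hρb, hsa0, hsa1, hsb0, hsb1,
        Equiv.swap_apply_left, Equiv.swap_apply_right]
  · refine ⟨?_, ?_, ?_⟩ <;> simp [hρ_mul, hs_mul, hρa, hρB, hsa0, hsa1, hsB0, hsB1]
  · refine ⟨?_, ?_, ?_⟩ <;>
      simp [hρ_mul, hs_mul, hρA, hρb, hsA0, hsA1, hsb0, hsb1,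
        Equiv.swap_apply_left, Equiv.swap_apply_right]
  -- contraction
  intro g
  set A := FreeGroup.of true with hA
  set B := FreeGroup.of false with hB
  set N : Set (FreeGroup Bool) := {1, A, A⁻¹, B, B⁻¹, A * B⁻¹, B * A⁻¹} with hN
  -- sections of the nucleus stay in the nucleus
  have hsec : ∀ g ∈ N, ∀ x, s g x ∈ N := by
    intro g hg x
    simp only [hN, Set.mem_insert_iff, Set.mem_singleton_iff] at hg ⊢
    fin_cases x <;>
      rcases hg with h | h | h | h | h | h | h <;>
        subst h <;>
        simp [hs_one, hs_mul, hρ_mul, hρa, hρb, hρA, hρB, hsa0, hsa1, hsb0, hsb1,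
          hsA0, hsA1, hsB0, hsB1, Equiv.swap_apply_left, Equiv.swap_apply_right]
  have hsecW : ∀ v : List (Fin 2), ∀ g ∈ N, secW s g v ∈ N := by
    intro v
    induction v with
    | nil => intro g hg; exact hg
    | cons x v ih => intro g hg; exact ih _ (hsec g hg x)
  -- products of two nucleus elements contract in two steps
  have hM2 : ∀ m ∈ N, ∀ n ∈ N, ∀ x y : Fin 2, s (s (m * n) x) y ∈ N := by
    intro m hm n hn x y
    simp only [hN, Set.mem_insert_iff, Set.mem_singleton_iff] at hm hn ⊢
    fin_cases x <;> fin_cases y <;>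
      rcases hm with h | h | h | h | h | h | h <;> subst h <;>
        rcases hn with h | h | h | h | h | h | h <;> subst h <;>
          simp [hs_one, hs_mul, hρ_mul, hρ_one, hρa, hρb, hρA, hρB, hsa0, hsa1,
            hsb0, hsb1, hsA0, hsA1, hsB0, hsB1,
            Equiv.swap_apply_left, Equiv.swap_apply_right] <;>
          decide
  have key : ∀ m ∈ N, ∀ n ∈ N, ∀ v : List (Fin 2), 2 ≤ v.length →
      secW s (m * n) v ∈ N := by
    intro m hm n hn v hv
    match v, hv with
    | x :: y :: w, _ =>
      show secW s (s (s (m * n) x) y) w ∈ N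
      exact hsecW w _ (hM2 m hm n hn x y)
  -- main induction
  induction g using FreeGroup.induction_on with
  | C1 =>
    exact ⟨0, fun v _ => hsecW v 1 (Or.inl rfl)⟩
  | of x =>
    refine ⟨0, fun v _ => hsecW v _ ?_⟩
    cases x
    · exact Or.inr (Or.inr (Or.inr (Or.inl rfl)))
    · exact Or.inr (Or.inl rfl)
  | inv_of x _ =>
    refine ⟨0, fun v _ => hsecW v _ ?_⟩
    cases x
    · exact Or.inr (Or.inr (Or.inr (Or.inr (Or.inl rfl))))
    · exact Or.inr (Or.inr (Or.inl rfl))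
  | mul g h ihg ihh =>
    obtain ⟨n₁, h₁⟩ := ihg
    obtain ⟨n₂, h₂⟩ := ihh
    refine ⟨max n₁ n₂ + 2, fun v hv => ?_⟩
    have hsplit : v = v.take (max n₁ n₂) ++ v.drop (max n₁ n₂) := (List.take_append_drop _ _).symm
    rw [hsplit, secW_append, secW_mul ρ s hs_mul]
    have hlen : (v.take (max n₁ n₂)).length = max n₁ n₂ := by
      rw [List.length_take]
      omega
    have hg' : secW s g (actW ρ s h (v.take (max n₁ n₂))) ∈ N := by
      apply h₁
      rw [actW_length, hlen]
      omega
    have hh' : secW s h (v.take (max n₁ n₂)) ∈ N := by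
      apply h₂
      rw [hlen]
      omega
    apply key _ hg' _ hh'
    rw [List.length_drop]
    omega
end

section
/- In the self-similar group acting on {1,…,8}* generated by a = (12)(67)(1,1,a,1,a,1,1,a), b = (46)(58)(b,b,b,1,1,1,1,1), c = (23)(78)(c,1,1,c,1,c,1,1), d = (14)(35)(1,1,1,1,1,d,d,d), the element ab has order 6, so that ⟨a, b⟩ is the dihedral group of order 12. -/
/-- The generator `a = (12)(67)(1,1,a,1,a,1,1,a)` of the Sierpiński carpet group,
acting on the rooted tree `{1,…,8}*` (letters coded as `Fin 8`, letter `i ↦ i-1`). -/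
def aMap : List (Fin 8) → List (Fin 8)
  | [] => []
  | x :: w => ((Equiv.swap (0 : Fin 8) 1 * Equiv.swap 5 6 : Equiv.Perm (Fin 8)) x) ::
      (if x = 2 ∨ x = 4 ∨ x = 7 then aMap w else w)

/-- The generator `b = (46)(58)(b,b,b,1,1,1,1,1)`. -/
def bMap : List (Fin 8) → List (Fin 8)
  | [] => []
  | x :: w => ((Equiv.swap (3 : Fin 8) 5 * Equiv.swap 4 7 : Equiv.Perm (Fin 8)) x) ::
      (if x = 0 ∨ x = 1 ∨ x = 2 then bMap w else w)

/-- `a` as an element of the transformation monoid of the tree. -/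
def aEnd : Function.End (List (Fin 8)) := aMap

/-- `b` as an element of the transformation monoid of the tree. -/
def bEnd : Function.End (List (Fin 8)) := bMap

namespace CarpetAux

def pA : Equiv.Perm (Fin 8) := Equiv.swap 0 1 * Equiv.swap 5 6
def pB : Equiv.Perm (Fin 8) := Equiv.swap 3 5 * Equiv.swap 4 7

theorem aa : ∀ w, aMap (aMap w) = w
  | [] => rfl
  | x :: w => by
    have hfix : ∀ y : Fin 8, (y = 2 ∨ y = 4 ∨ y = 7) → pA y = y := by decide
    have hnc : ∀ y : Fin 8, ¬(y = 2 ∨ y = 4 ∨ y = 7) →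
        ¬(pA y = 2 ∨ pA y = 4 ∨ pA y = 7) := by decide
    have hinv : ∀ y : Fin 8, pA (pA y) = y := by decide
    by_cases hx : x = 2 ∨ x = 4 ∨ x = 7
    · show aMap (pA x :: (if x = 2 ∨ x = 4 ∨ x = 7 then aMap w else w)) = x :: w
      rw [if_pos hx, hfix x hx]
      show pA x :: (if x = 2 ∨ x = 4 ∨ x = 7 then aMap (aMap w) else aMap w) = x :: w
      rw [if_pos hx, hfix x hx, aa w]
    · show aMap (pA x :: (if x = 2 ∨ x = 4 ∨ x = 7 then aMap w else w)) = x :: w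
      rw [if_neg hx]
      show pA (pA x) :: (if pA x = 2 ∨ pA x = 4 ∨ pA x = 7 then aMap w else w) = x :: w
      rw [if_neg (hnc x hx), hinv x]

theorem bb : ∀ w, bMap (bMap w) = w
  | [] => rfl
  | x :: w => by
    have hfix : ∀ y : Fin 8, (y = 0 ∨ y = 1 ∨ y = 2) → pB y = y := by decide
    have hnc : ∀ y : Fin 8, ¬(y = 0 ∨ y = 1 ∨ y = 2) →
        ¬(pB y = 0 ∨ pB y = 1 ∨ pB y = 2) := by decide
    have hinv : ∀ y : Fin 8, pB (pB y) = y := by decide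
    by_cases hx : x = 0 ∨ x = 1 ∨ x = 2
    · show bMap (pB x :: (if x = 0 ∨ x = 1 ∨ x = 2 then bMap w else w)) = x :: w
      rw [if_pos hx, hfix x hx]
      show pB x :: (if x = 0 ∨ x = 1 ∨ x = 2 then bMap (bMap w) else bMap w) = x :: w
      rw [if_pos hx, hfix x hx, bb w]
    · show bMap (pB x :: (if x = 0 ∨ x = 1 ∨ x = 2 then bMap w else w)) = x :: w
      rw [if_neg hx]
      show pB (pB x) :: (if pB x = 0 ∨ pB x = 1 ∨ pB x = 2 then bMap w else w) = x :: w
      rw [if_neg (hnc x hx), hinv x]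

/-- `(ab)^6 = 1` on the tree. -/
theorem ab6 : ∀ w, aMap (bMap (aMap (bMap (aMap (bMap (aMap (bMap (aMap (bMap
    (aMap (bMap w))))))))))) = w
  | [] => rfl
  | x :: w => by
    fin_cases x
    · show (0 : Fin 8) :: bMap (bMap (bMap (bMap (bMap (bMap w))))) = 0 :: w
      rw [bb, bb, bb]
    · show (1 : Fin 8) :: bMap (bMap (bMap (bMap (bMap (bMap w))))) = 1 :: w
      rw [bb, bb, bb]
    · show (2 : Fin 8) :: aMap (bMap (aMap (bMap (aMap (bMap (aMap (bMap (aMap (bMap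
        (aMap (bMap w))))))))))) = 2 :: w
      rw [ab6 w]
    · rfl
    · show (4 : Fin 8) :: aMap (aMap (aMap (aMap (aMap (aMap w))))) = 4 :: w
      rw [aa, aa, aa]
    · rfl
    · rfl
    · show (7 : Fin 8) :: aMap (aMap (aMap (aMap (aMap (aMap w))))) = 7 :: w
      rw [aa, aa, aa]

end CarpetAux

/-- In the Sierpiński carpet group, the element `ab` has order 6
(while `a` and `b` are involutions), so that `⟨a, b⟩` is the dihedral group of
order 12. -/
theorem carpet_ab_order_six :
    orderOf (aEnd * bEnd) = 6 ∧ orderOf aEnd = 2 ∧ orderOf bEnd = 2 ∧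
    Nonempty ((Submonoid.closure ({aEnd, bEnd} : Set (Function.End (List (Fin 8))))) ≃*
      DihedralGroup 6) := by
  set g : Function.End (List (Fin 8)) := aEnd * bEnd with hg
  have haa : aEnd * aEnd = 1 := funext CarpetAux.aa
  have hbb : bEnd * bEnd = 1 := funext CarpetAux.bb
  have hg6 : g ^ 6 = 1 := by
    funext w
    show aMap (bMap (aMap (bMap (aMap (bMap (aMap (bMap (aMap (bMap
      (aMap (bMap w))))))))))) = w
    exact CarpetAux.ab6 w
  have hane : aEnd ≠ 1 := by
    intro h
    have h0 : aMap [0] = [0] := congrFun h [0]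
    exact absurd h0 (by decide)
  have hbne : bEnd ≠ 1 := by
    intro h
    have h0 : bMap [3] = [3] := congrFun h [3]
    exact absurd h0 (by decide)
  have hoa : orderOf aEnd = 2 := by
    refine orderOf_eq_prime ?_ hane
    rw [sq]; exact haa
  have hob : orderOf bEnd = 2 := by
    refine orderOf_eq_prime ?_ hbne
    rw [sq]; exact hbb
  have hg2 : g ^ 2 ≠ 1 := by
    intro h
    have h3 : aMap (bMap (aMap (bMap [3]))) = [3] := congrFun h [3]
    exact absurd h3 (by decide)
  have hg3 : g ^ 3 ≠ 1 := by
    intro h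
    have h3 : aMap (bMap (aMap (bMap (aMap (bMap [0]))))) = [0] := congrFun h [0]
    exact absurd h3 (by decide)
  have ho : orderOf g = 6 := by
    have hdvd : orderOf g ∣ 6 := orderOf_dvd_of_pow_eq_one hg6
    have hle : orderOf g ≤ 6 := Nat.le_of_dvd (by norm_num) hdvd
    have hpos : 0 < orderOf g := Nat.pos_of_dvd_of_pos hdvd (by norm_num)
    have hpow := pow_orderOf_eq_one g
    interval_cases h : orderOf g
    · exact absurd (by rw [show (2:ℕ) = 1 * 2 by norm_num, pow_mul, hpow, one_pow]) hg2
    · exact absurd hpow hg2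
    · exact absurd hpow hg3
    · exact absurd hdvd (by norm_num)
    · exact absurd hdvd (by norm_num)
    · rfl
  -- basic dihedral relations
  have hsg : aEnd * g = bEnd := by rw [hg, ← mul_assoc, haa, one_mul]
  have hg5s : g ^ 5 * aEnd = bEnd := by
    have h1 : g ^ 5 * aEnd * bEnd = bEnd * bEnd := by
      rw [mul_assoc, show aEnd * bEnd = g from rfl, ← pow_succ, hg6, hbb]
    calc g ^ 5 * aEnd = g ^ 5 * aEnd * (bEnd * bEnd) := by rw [hbb, mul_one]
      _ = g ^ 5 * aEnd * bEnd * bEnd := by rw [mul_assoc (g ^ 5 * aEnd)]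
      _ = bEnd * bEnd * bEnd := by rw [h1]
      _ = bEnd := by rw [hbb, one_mul]
  have hsemi : SemiconjBy aEnd g (g ^ 5) := by
    show aEnd * g = g ^ 5 * aEnd
    rw [hsg, hg5s]
  have hgmod : ∀ m k : ℕ, m % 6 = k % 6 → g ^ m = g ^ k := by
    intro m k h
    rw [← pow_mod_orderOf g m, ← pow_mod_orderOf g k, ho, h]
  have hL : ∀ n : ℕ, aEnd * g ^ n = g ^ (5 * n) * aEnd := by
    intro n
    have := (hsemi.pow_right n)
    rw [← pow_mul] at this
    exact this
  have hL2 : ∀ n : ℕ, g ^ n * aEnd = aEnd * g ^ (5 * n) := by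
    intro n
    have h := hL (5 * n)
    have h25 : g ^ (5 * (5 * n)) = g ^ n := hgmod _ _ (by omega)
    rw [h25] at h
    exact h.symm
  -- the monoid hom from the dihedral group
  have harith1 : ∀ i j : ZMod 6, (i + j).val % 6 = (i.val + j.val) % 6 := by decide
  have harith2 : ∀ i j : ZMod 6, (j - i).val % 6 = (5 * i.val + j.val) % 6 := by decide
  let f : DihedralGroup 6 → Function.End (List (Fin 8)) := fun x =>
    match x with
    | .r i => g ^ i.val
    | .sr i => aEnd * g ^ i.val
  have hf_r : ∀ i : ZMod 6, f (.r i) = g ^ i.val := fun _ => rfl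
  have hf_sr : ∀ i : ZMod 6, f (.sr i) = aEnd * g ^ i.val := fun _ => rfl
  let φ : DihedralGroup 6 →* Function.End (List (Fin 8)) :=
    { toFun := f
      map_one' := by
        rw [DihedralGroup.one_def, hf_r, ZMod.val_zero, pow_zero]
      map_mul' := by
        intro x y
        show f (x * y) = f x * f y
        rcases x with i | i <;> rcases y with j | j
        · rw [DihedralGroup.r_mul_r, hf_r, hf_r, hf_r, ← pow_add]
          exact hgmod _ _ (harith1 i j)
        · rw [DihedralGroup.r_mul_sr, hf_sr, hf_r, hf_sr, ← mul_assoc, hL2, mul_assoc,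
            ← pow_add]
          exact congrArg (aEnd * ·) (hgmod _ _ (harith2 i j))
        · rw [DihedralGroup.sr_mul_r, hf_sr, hf_sr, hf_r, mul_assoc, ← pow_add]
          exact congrArg (aEnd * ·) (hgmod _ _ (harith1 i j))
        · rw [DihedralGroup.sr_mul_sr, hf_r, hf_sr, hf_sr, mul_assoc, ← mul_assoc (g ^ i.val),
            hL2, ← mul_assoc, ← mul_assoc, haa, one_mul, ← pow_add]
          exact hgmod _ _ (harith2 i j) }
  have hinj : Function.Injective φ := by
    rw [injective_iff_map_eq_one]
    intro x hx
    rcases x with i | i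
    · have h1 : g ^ i.val = 1 := hx
      have hdv : orderOf g ∣ i.val := orderOf_dvd_of_pow_eq_one h1
      rw [ho] at hdv
      have hlt : i.val < 6 := ZMod.val_lt i
      have h0 : i.val = 0 := Nat.eq_zero_of_dvd_of_lt hdv hlt
      have hi0 : i = 0 := (ZMod.val_eq_zero i).mp h0
      rw [hi0, ← DihedralGroup.one_def]
    · exfalso
      have h1 : aEnd * g ^ i.val = 1 := hx
      have ha' : g ^ i.val = aEnd := by
        calc g ^ i.val = (aEnd * aEnd) * g ^ i.val := by rw [haa, one_mul]
          _ = aEnd * (aEnd * g ^ i.val) := by rw [mul_assoc]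
          _ = aEnd := by rw [h1, mul_one]
      have hb' : bEnd = g ^ (i.val + 1) := by
        rw [pow_succ, ha', hsg]
      have hcomm : aEnd * bEnd = bEnd * aEnd := by
        rw [← ha', hb', ← pow_add, ← pow_add, Nat.add_comm]
      have h3 : aMap (bMap [3]) = bMap (aMap [3]) := congrFun hcomm [3]
      exact absurd h3 (by decide)
  have hcl : ∀ x : DihedralGroup 6,
      φ x ∈ Submonoid.closure ({aEnd, bEnd} : Set (Function.End (List (Fin 8)))) := by
    have hma : aEnd ∈ Submonoid.closure ({aEnd, bEnd} : Set (Function.End (List (Fin 8)))) :=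
      Submonoid.subset_closure (by simp)
    have hmb : bEnd ∈ Submonoid.closure ({aEnd, bEnd} : Set (Function.End (List (Fin 8)))) :=
      Submonoid.subset_closure (by simp)
    have hmg : g ∈ Submonoid.closure ({aEnd, bEnd} : Set (Function.End (List (Fin 8)))) :=
      mul_mem hma hmb
    intro x
    rcases x with i | i
    · exact pow_mem hmg i.val
    · exact mul_mem hma (pow_mem hmg i.val)
  let ψ : DihedralGroup 6 →*
      (Submonoid.closure ({aEnd, bEnd} : Set (Function.End (List (Fin 8))))) :=
    φ.codRestrict _ hcl
  have hψinj : Function.Injective ψ := by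
    intro x y h
    apply hinj
    exact congrArg Subtype.val h
  have hψsurj : Function.Surjective ψ := by
    rintro ⟨y, hy⟩
    have : y ∈ Submonoid.closure ({aEnd, bEnd} : Set (Function.End (List (Fin 8)))) := hy
    -- show closure ≤ range of φ
    have hsub : Submonoid.closure ({aEnd, bEnd} : Set (Function.End (List (Fin 8)))) ≤
        MonoidHom.mrange φ := by
      rw [Submonoid.closure_le]
      rintro z (rfl | rfl)
      · exact ⟨.sr 0, by rw [show φ (.sr 0) = aEnd * g ^ (0 : ZMod 6).val from rfl,
          ZMod.val_zero, pow_zero, mul_one]⟩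
      · exact ⟨.sr 1, by
          rw [show φ (.sr 1) = aEnd * g ^ (1 : ZMod 6).val from rfl,
            show ((1 : ZMod 6)).val = 1 from rfl, pow_one, hsg]⟩
    obtain ⟨x, hx⟩ := hsub hy
    exact ⟨x, Subtype.ext hx⟩
  exact ⟨ho, hoa, hob, ⟨(MulEquiv.ofBijective ψ ⟨hψinj, hψsurj⟩).symm⟩⟩
end

section
/- For the wreath recursion over the free product ⟨a⟩ * ⟨b, c, d⟩ ≅ (ℤ/2ℤ) * (ℤ/2ℤ)² on the alphabet {1,…,6} given by a = (12)(34)(56), b = (a,b,a,b,1,b), c = (a,c,1,c,a,c), d = (1,d,a,d,a,d), the recursion is contracting: every element of the group has all sufficiently deep sections in the finite set {1, a, b, c, d, ab, ba, ac, ca, ad, da, …} generated as the set of sections of products of a nucleus element with a generator stabilizes. -/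
/-- Abstract letters for the generators of the universal Grigorchuk group. -/
inductive GLtr : Type
  | A | B | C | D
  deriving DecidableEq

namespace GLtr

/-- Whether the letter is `A`. -/
def isA : GLtr → Bool
  | A => true
  | _ => false

/-- Evaluation of a letter in the group. -/
def ev {G : Type*} (a b c d : G) : GLtr → G
  | A => a | B => b | C => c | D => d

end GLtr

/-- Evaluation of a word of letters in the group. -/
def evalW {G : Type*} [Monoid G] (a b c d : G) (L : List GLtr) : G :=
  (L.map (GLtr.ev a b c d)).prod

/-- A word is alternating if adjacent letters differ on `isA`. -/
def altW : List GLtr → Prop :=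
  List.Chain' (fun x y => x.isA ≠ y.isA)

/-- Number of non-`A` letters in a word. -/
def bcdCount (L : List GLtr) : ℕ :=
  (L.filter (fun x => !x.isA)).length

lemma bcdCount_nil : bcdCount [] = 0 := rfl

lemma bcdCount_cons (x : GLtr) (t : List GLtr) :
    bcdCount (x :: t) = (if x.isA then 0 else 1) + bcdCount t := by
  cases hx : x.isA <;> simp [bcdCount, List.filter, hx] <;> omega

lemma altW_count_aux : ∀ (t : List GLtr) (x : GLtr), altW (x :: t) →
    2 * bcdCount (x :: t) ≤ t.length + 1 + (if x.isA then 0 else 1) := by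
  intro t
  induction t with
  | nil =>
    intro x _
    rw [bcdCount_cons, bcdCount_nil]
    cases x.isA <;> simp
  | cons y t' ih =>
    intro x hx
    rcases List.isChain_cons_cons.mp hx with ⟨hxy, hy⟩
    have h1 := ih y hy
    rw [bcdCount_cons] at h1 ⊢
    rw [bcdCount_cons]
    have : (if x.isA then 0 else 1) + (if y.isA then 0 else 1) = 1 := by
      cases hxa : x.isA <;> cases hya : y.isA <;> simp_all
    simp only [List.length_cons] at *
    omega

lemma altW_count (L : List GLtr) (h : altW L) : 2 * bcdCount L ≤ L.length + 1 := by
  cases L with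
  | nil => simp [bcdCount_nil]
  | cons x t =>
    have := altW_count_aux t x h
    have : (if x.isA then 0 else 1) ≤ 1 := by cases x.isA <;> simp
    simp only [List.length_cons]
    omega

/-- The wreath recursion of the universal Grigorchuk group over the
free product `⟨a⟩ * ⟨b, c, d⟩ ≅ (ℤ/2) * (ℤ/2)²` on the alphabet `{1,…,6}` (coded as
`Fin 6`), given by `a = (12)(34)(56)`, `b = (a,b,a,b,1,b)`, `c = (a,c,1,c,a,c)`,
`d = (1,d,a,d,a,d)`, is contracting: there is a finite set `N ∋ 1` such that every
element of the group has all sufficiently deep sections in `N`. -/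
theorem universal_grigorchuk_contracting {G : Type*} [Group G] (a b c d : G)
    (ha2 : a ^ 2 = 1) (hb2 : b ^ 2 = 1) (hc2 : c ^ 2 = 1) (hd2 : d ^ 2 = 1)
    (hbc : b * c = c * b) (hd : d = b * c)
    (hgen : Subgroup.closure ({a, b, c, d} : Set G) = ⊤)
    (ρ : G → Equiv.Perm (Fin 6)) (s : G → Fin 6 → G)
    (hρ_one : ρ 1 = 1)
    (hρ_mul : ∀ g h, ρ (g * h) = ρ g * ρ h)
    (hs_one : ∀ x, s 1 x = 1)
    (hs_mul : ∀ g h x, s (g * h) x = s g (ρ h x) * s h x)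
    (hρa : ρ a = Equiv.swap 0 1 * Equiv.swap 2 3 * Equiv.swap 4 5)
    (hsa : ∀ i, s a i = 1)
    (hρb : ρ b = 1) (hsb : s b = ![a, b, a, b, 1, b])
    (hρc : ρ c = 1) (hsc : s c = ![a, c, 1, c, a, c])
    (hρd : ρ d = 1) (hsd : s d = ![1, d, a, d, a, d]) :
    ∃ N : Finset G, (1 : G) ∈ N ∧
      ∀ g : G, ∃ n : ℕ, ∀ v : List (Fin 6), n ≤ v.length → secW s g v ∈ N := by
  classical
  -- basic involution facts
  have haa : a * a = 1 := by rw [← pow_two]; exact ha2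
  have hbb : b * b = 1 := by rw [← pow_two]; exact hb2
  have hcc : c * c = 1 := by rw [← pow_two]; exact hc2
  have hdd : d * d = 1 := by rw [← pow_two]; exact hd2
  set E : List GLtr → G := evalW a b c d with hEdef
  have hEnil : E [] = 1 := rfl
  have hEcons : ∀ (x : GLtr) (L : List GLtr), E (x :: L) = x.ev a b c d * E L := by
    intro x L; simp [hEdef, evalW]
  have hev_inv : ∀ x : GLtr, x.ev a b c d * x.ev a b c d = 1 := by
    intro x; cases x <;> assumption
  -- the nucleus
  refine ⟨{1, a, b, c, d}, by simp, ?_⟩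
  -- reduction step: multiplying an alternating word by a letter on the left
  have step : ∀ (x : GLtr) (M : List GLtr), altW M →
      ∃ M', altW M' ∧ M'.length ≤ M.length + 1 ∧ E M' = x.ev a b c d * E M := by
    intro x M hM
    match M with
    | [] =>
      exact ⟨[x], List.isChain_singleton x, by simp, by rw [hEcons, hEnil]⟩
    | y :: t =>
      rcases List.isChain_cons.mp hM with ⟨hhead, ht⟩
      by_cases hxy : x.isA = y.isA
      · -- reduce: combine the two letters
        have mkone : x.ev a b c d * y.ev a b c d = 1 →
            ∃ M', altW M' ∧ M'.length ≤ (y :: t).length + 1 ∧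
              E M' = x.ev a b c d * E (y :: t) := by
          intro h1
          refine ⟨t, ht, by simp only [List.length_cons]; omega, ?_⟩
          rw [hEcons, ← mul_assoc, h1, one_mul]
        have mkz : ∀ z : GLtr, z.isA = false →
            z.ev a b c d = x.ev a b c d * y.ev a b c d →
            y.isA = false →
            ∃ M', altW M' ∧ M'.length ≤ (y :: t).length + 1 ∧
              E M' = x.ev a b c d * E (y :: t) := by
          intro z hz hze hy
          refine ⟨z :: t, ?_, by simp only [List.length_cons]; omega, ?_⟩
          · refine List.isChain_cons.mpr ⟨?_, ht⟩
            intro w hw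
            have := hhead w hw
            rw [hy] at this
            rw [hz]
            exact this
          · rw [hEcons, hEcons, ← mul_assoc, hze]
        cases x with
        | A =>
          cases y with
          | A => exact mkone (by simpa [GLtr.ev] using haa)
          | B => simp [GLtr.isA] at hxy
          | C => simp [GLtr.isA] at hxy
          | D => simp [GLtr.isA] at hxy
        | B =>
          cases y with
          | A => simp [GLtr.isA] at hxy
          | B => exact mkone (by simpa [GLtr.ev] using hbb)
          | C => exact mkz GLtr.D rfl (by simp only [GLtr.ev]; rw [hd]) rfl
          | D =>
            exact mkz GLtr.C rfl (by simp only [GLtr.ev]; rw [hd, ← mul_assoc, hbb, one_mul]) rfl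
        | C =>
          cases y with
          | A => simp [GLtr.isA] at hxy
          | B => exact mkz GLtr.D rfl (by simp only [GLtr.ev]; rw [hd, hbc]) rfl
          | C => exact mkone (by simpa [GLtr.ev] using hcc)
          | D =>
            exact mkz GLtr.B rfl
              (by simp only [GLtr.ev]; rw [hd, ← mul_assoc, ← hbc, mul_assoc, hcc, mul_one]) rfl
        | D =>
          cases y with
          | A => simp [GLtr.isA] at hxy
          | B =>
            exact mkz GLtr.C rfl
              (by simp only [GLtr.ev]; rw [hd, mul_assoc, ← hbc, ← mul_assoc, hbb, one_mul]) rfl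
          | C =>
            exact mkz GLtr.B rfl (by simp only [GLtr.ev]; rw [hd, mul_assoc, hcc, mul_one]) rfl
          | D => exact mkone (by simpa [GLtr.ev] using hdd)
      · -- no reduction: prepend
        refine ⟨x :: y :: t, List.isChain_cons_cons.mpr ⟨hxy, hM⟩, ?_, hEcons x (y :: t)⟩
        simp only [List.length_cons]
        omega
  -- every word can be replaced by an alternating word of at most the same length
  have altify : ∀ M : List GLtr, ∃ M', altW M' ∧ M'.length ≤ M.length ∧ E M' = E M := by
    intro M
    induction M with
    | nil => exact ⟨[], List.isChain_nil, le_rfl, rfl⟩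
    | cons y t ih =>
      obtain ⟨M₁, h1, h2, h3⟩ := ih
      obtain ⟨M', h1', h2', h3'⟩ := step y M₁ h1
      refine ⟨M', h1', ?_, ?_⟩
      · simp only [List.length_cons]; omega
      · rw [h3', h3, hEcons]
  -- every group element is the value of some word
  have exWord : ∀ g : G, ∃ L : List GLtr, E L = g := by
    have hrev : ∀ L : List GLtr, E L.reverse = (E L)⁻¹ := by
      intro L
      induction L with
      | nil => simp [hEnil]
      | cons y t ih =>
        have : E (t.reverse ++ [y]) = E t.reverse * E [y] := by
          simp [hEdef, evalW]
        rw [List.reverse_cons, this, ih, hEcons y t, mul_inv_rev,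
          hEcons y ([] : List GLtr), hEnil, mul_one,
          inv_eq_of_mul_eq_one_right (hev_inv y)]
    intro g
    have hg : g ∈ Subgroup.closure ({a, b, c, d} : Set G) := by
      rw [hgen]; trivial
    refine Subgroup.closure_induction ?_ ⟨[], hEnil⟩ ?_ ?_ hg
    · intro x hx
      rcases hx with h | h | h | h
      · exact ⟨[GLtr.A], by rw [hEcons, hEnil, mul_one, h]; rfl⟩
      · exact ⟨[GLtr.B], by rw [hEcons, hEnil, mul_one, h]; rfl⟩
      · exact ⟨[GLtr.C], by rw [hEcons, hEnil, mul_one, h]; rfl⟩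
      · exact ⟨[GLtr.D], by rw [hEcons, hEnil, mul_one, h]; rfl⟩
    · rintro x y _ _ ⟨Lx, hLx⟩ ⟨Ly, hLy⟩
      refine ⟨Lx ++ Ly, ?_⟩
      simp [hEdef, evalW] at hLx hLy ⊢
      rw [hLx, hLy]
    · rintro x _ ⟨L, hL⟩
      exact ⟨L.reverse, by rw [hrev, hL]⟩
  -- sections of a single letter
  have secLetter : ∀ (y : GLtr) (i : Fin 6),
      ∃ My : List GLtr, My.length ≤ (if y.isA then 0 else 1) ∧
        E My = s (y.ev a b c d) i := by
    intro y i
    cases y with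
    | A => exact ⟨[], by simp [GLtr.isA], by show E [] = s a _; rw [hEnil, hsa]⟩
    | B =>
      fin_cases i
      · exact ⟨[GLtr.A], by simp [GLtr.isA], by show E [GLtr.A] = s b _; rw [hEcons, hEnil, mul_one, hsb]; rfl⟩
      · exact ⟨[GLtr.B], by simp [GLtr.isA], by show E [GLtr.B] = s b _; rw [hEcons, hEnil, mul_one, hsb]; rfl⟩
      · exact ⟨[GLtr.A], by simp [GLtr.isA], by show E [GLtr.A] = s b _; rw [hEcons, hEnil, mul_one, hsb]; rfl⟩
      · exact ⟨[GLtr.B], by simp [GLtr.isA], by show E [GLtr.B] = s b _; rw [hEcons, hEnil, mul_one, hsb]; rfl⟩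
      · exact ⟨[], by simp [GLtr.isA], by show E [] = s b _; rw [hEnil, hsb]; rfl⟩
      · exact ⟨[GLtr.B], by simp [GLtr.isA], by show E [GLtr.B] = s b _; rw [hEcons, hEnil, mul_one, hsb]; rfl⟩
    | C =>
      fin_cases i
      · exact ⟨[GLtr.A], by simp [GLtr.isA], by show E [GLtr.A] = s c _; rw [hEcons, hEnil, mul_one, hsc]; rfl⟩
      · exact ⟨[GLtr.C], by simp [GLtr.isA], by show E [GLtr.C] = s c _; rw [hEcons, hEnil, mul_one, hsc]; rfl⟩
      · exact ⟨[], by simp [GLtr.isA], by show E [] = s c _; rw [hEnil, hsc]; rfl⟩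
      · exact ⟨[GLtr.C], by simp [GLtr.isA], by show E [GLtr.C] = s c _; rw [hEcons, hEnil, mul_one, hsc]; rfl⟩
      · exact ⟨[GLtr.A], by simp [GLtr.isA], by show E [GLtr.A] = s c _; rw [hEcons, hEnil, mul_one, hsc]; rfl⟩
      · exact ⟨[GLtr.C], by simp [GLtr.isA], by show E [GLtr.C] = s c _; rw [hEcons, hEnil, mul_one, hsc]; rfl⟩
    | D =>
      fin_cases i
      · exact ⟨[], by simp [GLtr.isA], by show E [] = s d _; rw [hEnil, hsd]; rfl⟩
      · exact ⟨[GLtr.D], by simp [GLtr.isA], by show E [GLtr.D] = s d _; rw [hEcons, hEnil, mul_one, hsd]; rfl⟩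
      · exact ⟨[GLtr.A], by simp [GLtr.isA], by show E [GLtr.A] = s d _; rw [hEcons, hEnil, mul_one, hsd]; rfl⟩
      · exact ⟨[GLtr.D], by simp [GLtr.isA], by show E [GLtr.D] = s d _; rw [hEcons, hEnil, mul_one, hsd]; rfl⟩
      · exact ⟨[GLtr.A], by simp [GLtr.isA], by show E [GLtr.A] = s d _; rw [hEcons, hEnil, mul_one, hsd]; rfl⟩
      · exact ⟨[GLtr.D], by simp [GLtr.isA], by show E [GLtr.D] = s d _; rw [hEcons, hEnil, mul_one, hsd]; rfl⟩
  -- sections of a word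
  have secList : ∀ (L : List GLtr) (i : Fin 6),
      ∃ M : List GLtr, M.length ≤ bcdCount L ∧ E M = s (E L) i := by
    intro L
    induction L with
    | nil =>
      intro i
      exact ⟨[], by simp [bcdCount_nil], by rw [hEnil, hs_one]⟩
    | cons y t ih =>
      intro i
      obtain ⟨My, hMy1, hMy2⟩ := secLetter y (ρ (E t) i)
      obtain ⟨Mt, h1, h2⟩ := ih i
      refine ⟨My ++ Mt, ?_, ?_⟩
      · rw [bcdCount_cons]
        simp only [List.length_append]
        omega
      · have happ : E (My ++ Mt) = E My * E Mt := by simp [hEdef, evalW]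
        rw [happ, hMy2, h2, hEcons, hs_mul]
  -- the main contraction induction
  have main : ∀ (v : List (Fin 6)) (g : G) (L : List GLtr), altW L →
      L.length ≤ v.length + 1 → E L = g →
      secW s g v ∈ ({1, a, b, c, d} : Finset G) := by
    intro v
    induction v with
    | nil =>
      intro g L hAlt hLen hEq
      show g ∈ _
      match L, hLen with
      | [], _ =>
        rw [← hEq, hEnil]; simp
      | [x], _ =>
        rw [← hEq, hEcons, hEnil, mul_one]
        cases x <;> simp [GLtr.ev]
    | cons i v ih =>
      intro g L hAlt hLen hEq
      show secW s (s g i) v ∈ _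
      obtain ⟨M, hM1, hM2⟩ := secList L i
      obtain ⟨M', hA', hL', hE'⟩ := altify M
      refine ih (s g i) M' hA' ?_ (by rw [hE', hM2, hEq])
      have hcnt := altW_count L hAlt
      simp only [List.length_cons] at hLen
      omega
  -- conclude
  intro g
  obtain ⟨L0, hL0⟩ := exWord g
  obtain ⟨L, hA, hLen, hEv⟩ := altify L0
  exact ⟨L.length, fun v hv => main v g L hA (by omega) (by rw [hEv, hL0])⟩
end
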